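/- Let Θ = {0, 1, …, m−1} with a fixed traversal order, and let P : Finset (Fin m) → Prop be antitone with P ∅. Define the greedy sequential process: B₀ = ∅, and for i from 0 to m−1, set Bᵢ₊₁ = Bᵢ ∪ {i} if P (Bᵢ ∪ {i}) holds and Bᵢ₊₁ = Bᵢ otherwise. Then A = Θ \ Bₘ satisfies P (Θ \ A), and for every x ∈ A, ¬ P ((Θ \ A) ∪ {x}). -/
import Mathlib


theorem stmt_8 (m : ℕ) (P : Finset (Fin m) → Prop)
    (hanti : ∀ B' B : Finset (Fin m), B' ⊆ B → P B → P B')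
    (hempty : P ∅)
    (B : ℕ → Finset (Fin m))
    (hB0 : B 0 = ∅)
    (hstep : ∀ i : Fin m,
      (P (B i.val ∪ {i}) → B (i.val + 1) = B i.val ∪ {i}) ∧
      (¬ P (B i.val ∪ {i}) → B (i.val + 1) = B i.val)) :
    P (Finset.univ \ (Finset.univ \ B m)) ∧
      ∀ x ∈ Finset.univ \ B m, ¬ P ((Finset.univ \ (Finset.univ \ B m)) ∪ {x}) := by
  have hstep1 : ∀ i, i < m → B i ⊆ B (i + 1) := by
    intro i hi
    obtain ⟨h1, h2⟩ := hstep ⟨i, hi⟩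
    by_cases hp : P (B i ∪ {⟨i, hi⟩})
    · rw [h1 hp]; exact Finset.subset_union_left
    · rw [h2 hp]
  have hmono : ∀ i k, i + k ≤ m → B i ⊆ B (i + k) := by
    intro i k
    induction k with
    | zero => intro _; rfl
    | succ n ih =>
      intro h
      have h' : i + n ≤ m := by omega
      exact (ih h').trans (hstep1 (i + n) (by omega))
  have hsub : ∀ i, i ≤ m → B i ⊆ B m := by
    intro i hi
    have := hmono i (m - i) (by omega)
    rwa [Nat.add_sub_cancel' hi] at this
  have hP : ∀ i, i ≤ m → P (B i) := by
    intro i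
    induction i with
    | zero => intro _; rw [hB0]; exact hempty
    | succ n ih =>
      intro h
      have hn : n < m := by omega
      obtain ⟨h1, h2⟩ := hstep ⟨n, hn⟩
      by_cases hp : P (B n ∪ {⟨n, hn⟩})
      · rw [h1 hp]; exact hp
      · rw [h2 hp]; exact ih (by omega)
  have hEq : Finset.univ \ (Finset.univ \ B m) = B m := by
    simp
  rw [hEq]
  refine ⟨hP m le_rfl, ?_⟩
  intro x hx hPx
  rw [Finset.mem_sdiff] at hx
  have hxm : (x : ℕ) < m := x.isLt
  obtain ⟨h1, h2⟩ := hstep x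
  -- x with its value i := x.val
  have hnot : ¬ P (B x.val ∪ {x}) := by
    intro hp
    have : x ∈ B (x.val + 1) := by rw [h1 hp]; simp
    exact hx.2 (hsub (x.val + 1) (by omega) this)
  exact hnot (hanti _ _ (Finset.union_subset_union (hsub x.val (by omega)) le_rfl) hPx)
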